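/- Soundness of the variant K8 of the Kuroda translation into minimal logic: if CL + Γ ⊢ A then ML + K8(Γ) ⊢ K8(A), where the inner translation maps (A → B) to ¬(A^{K8} ∧ ¬B^{K8}), atomic P to P, commutes with ∧, ∨, ∃, maps ∀x A to ∀x ¬¬A^{K8}, and K8(A) ≡ ¬¬A^{K8}. -/
import Mathlib


/-- First-order formulas over domain `α`, with HOAS quantifiers.
`bot` is an ordinary atom with no special rules in minimal logic. -/
inductive Formula (α : Type) : Type where
  | atom : ℕ → List α → Formula α
  | bot : Formula α
  | and : Formula α → Formula α → Formula α
  | or : Formula α → Formula α → Formula α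
  | imp : Formula α → Formula α → Formula α
  | all : (α → Formula α) → Formula α
  | ex : (α → Formula α) → Formula α

/-- Negation: `¬A ≡ A → ⊥`. -/
def Formula.neg {α : Type} (A : Formula α) : Formula α := A.imp .bot

/-- Biconditional. -/
def Formula.iff {α : Type} (A B : Formula α) : Formula α := (A.imp B).and (B.imp A)

/-- Minimal first-order logic: natural deduction without ex falso quodlibet. -/
inductive ML {α : Type} : Set (Formula α) → Formula α → Prop where
  | ax {Γ : Set (Formula α)} {A : Formula α} : A ∈ Γ → ML Γ A
  | impI {Γ : Set (Formula α)} {A B : Formula α} : ML (insert A Γ) B → ML Γ (A.imp B)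
  | impE {Γ : Set (Formula α)} {A B : Formula α} : ML Γ (A.imp B) → ML Γ A → ML Γ B
  | andI {Γ : Set (Formula α)} {A B : Formula α} : ML Γ A → ML Γ B → ML Γ (A.and B)
  | andE1 {Γ : Set (Formula α)} {A B : Formula α} : ML Γ (A.and B) → ML Γ A
  | andE2 {Γ : Set (Formula α)} {A B : Formula α} : ML Γ (A.and B) → ML Γ B
  | orI1 {Γ : Set (Formula α)} {A B : Formula α} : ML Γ A → ML Γ (A.or B)
  | orI2 {Γ : Set (Formula α)} {A B : Formula α} : ML Γ B → ML Γ (A.or B)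
  | orE {Γ : Set (Formula α)} {A B C : Formula α} : ML Γ (A.or B) → ML (insert A Γ) C → ML (insert B Γ) C → ML Γ C
  | allI {Γ : Set (Formula α)} {f : α → Formula α} : (∀ a, ML Γ (f a)) → ML Γ (.all f)
  | allE {Γ f} (a : α) : ML Γ (.all f) → ML Γ (f a)
  | exI {Γ f} (a : α) : ML Γ (f a) → ML Γ (.ex f)
  | exE {Γ : Set (Formula α)} {f : α → Formula α} {C : Formula α} : ML Γ (.ex f) → (∀ a, ML (insert (f a) Γ) C) → ML Γ C

/-- Intuitionistic first-order logic: minimal logic plus ex falso quodlibet. -/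
inductive IL {α : Type} : Set (Formula α) → Formula α → Prop where
  | ax {Γ : Set (Formula α)} {A : Formula α} : A ∈ Γ → IL Γ A
  | impI {Γ : Set (Formula α)} {A B : Formula α} : IL (insert A Γ) B → IL Γ (A.imp B)
  | impE {Γ : Set (Formula α)} {A B : Formula α} : IL Γ (A.imp B) → IL Γ A → IL Γ B
  | andI {Γ : Set (Formula α)} {A B : Formula α} : IL Γ A → IL Γ B → IL Γ (A.and B)
  | andE1 {Γ : Set (Formula α)} {A B : Formula α} : IL Γ (A.and B) → IL Γ A
  | andE2 {Γ : Set (Formula α)} {A B : Formula α} : IL Γ (A.and B) → IL Γ B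
  | orI1 {Γ : Set (Formula α)} {A B : Formula α} : IL Γ A → IL Γ (A.or B)
  | orI2 {Γ : Set (Formula α)} {A B : Formula α} : IL Γ B → IL Γ (A.or B)
  | orE {Γ : Set (Formula α)} {A B C : Formula α} : IL Γ (A.or B) → IL (insert A Γ) C → IL (insert B Γ) C → IL Γ C
  | allI {Γ : Set (Formula α)} {f : α → Formula α} : (∀ a, IL Γ (f a)) → IL Γ (.all f)
  | allE {Γ f} (a : α) : IL Γ (.all f) → IL Γ (f a)
  | exI {Γ f} (a : α) : IL Γ (f a) → IL Γ (.ex f)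
  | exE {Γ : Set (Formula α)} {f : α → Formula α} {C : Formula α} : IL Γ (.ex f) → (∀ a, IL (insert (f a) Γ) C) → IL Γ C
  | efq {Γ : Set (Formula α)} {A : Formula α} : IL Γ .bot → IL Γ A

/-- Classical first-order logic: minimal logic plus double negation elimination. -/
inductive CL {α : Type} : Set (Formula α) → Formula α → Prop where
  | ax {Γ : Set (Formula α)} {A : Formula α} : A ∈ Γ → CL Γ A
  | impI {Γ : Set (Formula α)} {A B : Formula α} : CL (insert A Γ) B → CL Γ (A.imp B)
  | impE {Γ : Set (Formula α)} {A B : Formula α} : CL Γ (A.imp B) → CL Γ A → CL Γ B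
  | andI {Γ : Set (Formula α)} {A B : Formula α} : CL Γ A → CL Γ B → CL Γ (A.and B)
  | andE1 {Γ : Set (Formula α)} {A B : Formula α} : CL Γ (A.and B) → CL Γ A
  | andE2 {Γ : Set (Formula α)} {A B : Formula α} : CL Γ (A.and B) → CL Γ B
  | orI1 {Γ : Set (Formula α)} {A B : Formula α} : CL Γ A → CL Γ (A.or B)
  | orI2 {Γ : Set (Formula α)} {A B : Formula α} : CL Γ B → CL Γ (A.or B)
  | orE {Γ : Set (Formula α)} {A B C : Formula α} : CL Γ (A.or B) → CL (insert A Γ) C → CL (insert B Γ) C → CL Γ C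
  | allI {Γ : Set (Formula α)} {f : α → Formula α} : (∀ a, CL Γ (f a)) → CL Γ (.all f)
  | allE {Γ f} (a : α) : CL Γ (.all f) → CL Γ (f a)
  | exI {Γ f} (a : α) : CL Γ (f a) → CL Γ (.ex f)
  | exE {Γ : Set (Formula α)} {f : α → Formula α} {C : Formula α} : CL Γ (.ex f) → (∀ a, CL (insert (f a) Γ) C) → CL Γ C
  | dne {Γ : Set (Formula α)} {A : Formula α} : CL Γ A.neg.neg → CL Γ A

/-- Inner translation of K8: `(A → B)` goes to `¬(A^{K8} ∧ ¬B^{K8})`, otherwise as Kuroda. -/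
def kurodaEight {α : Type} : Formula α → Formula α
  | .atom n ts => Formula.atom n ts
  | .bot => Formula.bot
  | .and A B => (kurodaEight A).and (kurodaEight B)
  | .or A B => (kurodaEight A).or (kurodaEight B)
  | .imp A B => ((kurodaEight A).and (kurodaEight B).neg).neg
  | .all f => .all (fun a => (kurodaEight (f a)).neg.neg)
  | .ex f => .ex (fun a => kurodaEight (f a))


namespace ML
variable {α : Type} {Γ Δ : Set (Formula α)} {A B C : Formula α}

theorem weaken (h : ML Γ A) (s : Γ ⊆ Δ) : ML Δ A := by
  induction h generalizing Δ with
  | ax m => exact .ax (s m)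
  | impI _ ih => exact .impI (ih (Set.insert_subset_insert s))
  | impE _ _ ih1 ih2 => exact .impE (ih1 s) (ih2 s)
  | andI _ _ ih1 ih2 => exact .andI (ih1 s) (ih2 s)
  | andE1 _ ih => exact .andE1 (ih s)
  | andE2 _ ih => exact .andE2 (ih s)
  | orI1 _ ih => exact .orI1 (ih s)
  | orI2 _ ih => exact .orI2 (ih s)
  | orE _ _ _ ih ih1 ih2 =>
      exact .orE (ih s) (ih1 (Set.insert_subset_insert s)) (ih2 (Set.insert_subset_insert s))
  | allI _ ih => exact .allI (fun a => ih a s)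
  | allE a _ ih => exact .allE a (ih s)
  | exI a _ ih => exact .exI a (ih s)
  | exE _ _ ih ihs => exact .exE (ih s) (fun a => ihs a (Set.insert_subset_insert s))

theorem wk (h : ML Γ A) : ML (insert B Γ) A := h.weaken (Set.subset_insert _ _)

theorem ax0 : ML (insert A Γ) A := .ax (Set.mem_insert _ _)

theorem ax1 : ML (insert B (insert A Γ)) A := .ax (Set.mem_insert_of_mem _ (Set.mem_insert _ _))

theorem ax2 : ML (insert C (insert B (insert A Γ))) A :=
  .ax (Set.mem_insert_of_mem _ (Set.mem_insert_of_mem _ (Set.mem_insert _ _)))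

theorem dni (h : ML Γ A) : ML Γ A.neg.neg := .impI (.impE ax0 h.wk)

theorem tne (h : ML Γ A.neg.neg.neg) : ML Γ A.neg := .impI (.impE h.wk (dni ax0))

end ML

/-- Soundness of K8: if `CL + Γ ⊢ A` then `ML + K8(Γ) ⊢ K8(A)`. -/

theorem kurodaEight_soundness {α : Type} (Γ : Set (Formula α)) (A : Formula α)
    (h : CL Γ A) : ML ((fun G => (kurodaEight G).neg.neg) '' Γ) ((kurodaEight A).neg.neg) := by
  induction h with
  | @ax Γ A m => exact ML.ax ⟨A, m, rfl⟩
  | @impI Γ A B _ ih =>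
      simp only [Set.image_insert_eq] at ih
      simp only [kurodaEight]
      apply ML.dni
      apply ML.impI
      have hA : ML (insert ((kurodaEight A).and (kurodaEight B).neg)
          ((fun G => (kurodaEight G).neg.neg) '' Γ)) (kurodaEight A) := ML.andE1 ML.ax0
      have hB' : ML (insert ((kurodaEight A).and (kurodaEight B).neg)
          ((fun G => (kurodaEight G).neg.neg) '' Γ)) (kurodaEight B).neg := ML.andE2 ML.ax0
      exact ML.impE (ML.impE (ML.impI ih).wk hA.dni) hB'
  | @impE Γ A B _ _ ih1 ih2 =>
      simp only [kurodaEight] at ih1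
      apply ML.impI
      have hnX := (ih1.tne).wk (B := (kurodaEight B).neg)
      have hnA : ML (insert (kurodaEight B).neg ((fun G => (kurodaEight G).neg.neg) '' Γ))
          (kurodaEight A).neg :=
        ML.impI (ML.impE hnX.wk (ML.andI ML.ax0 ML.ax1))
      exact ML.impE ih2.wk hnA
  | @andI Γ A B _ _ ih1 ih2 =>
      simp only [kurodaEight]
      apply ML.impI
      refine ML.impE ih1.wk (ML.impI (ML.impE ih2.wk.wk ?_))
      exact ML.impI (ML.impE ML.ax2 (ML.andI ML.ax1 ML.ax0))
  | @andE1 Γ A B _ ih =>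
      simp only [kurodaEight] at ih
      exact ML.impI (ML.impE ih.wk (ML.impI (ML.impE ML.ax1 (ML.andE1 ML.ax0))))
  | @andE2 Γ A B _ ih =>
      simp only [kurodaEight] at ih
      exact ML.impI (ML.impE ih.wk (ML.impI (ML.impE ML.ax1 (ML.andE2 ML.ax0))))
  | @orI1 Γ A B _ ih =>
      simp only [kurodaEight]
      exact ML.impI (ML.impE ih.wk (ML.impI (ML.impE ML.ax1 (ML.orI1 ML.ax0))))
  | @orI2 Γ A B _ ih =>
      simp only [kurodaEight]
      exact ML.impI (ML.impE ih.wk (ML.impI (ML.impE ML.ax1 (ML.orI2 ML.ax0))))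
  | @orE Γ A B C _ _ _ ih ih1 ih2 =>
      simp only [kurodaEight] at ih
      simp only [Set.image_insert_eq] at ih1 ih2
      apply ML.impI
      refine ML.impE ih.wk (ML.impI (ML.orE ML.ax0 ?_ ?_))
      · exact ML.impE (ML.impE (ML.impI ih1).wk.wk.wk (ML.dni ML.ax0)) ML.ax2
      · exact ML.impE (ML.impE (ML.impI ih2).wk.wk.wk (ML.dni ML.ax0)) ML.ax2
  | @allI Γ f _ ihs =>
      exact ML.dni (ML.allI (fun a => ihs a))
  | @allE Γ f a _ ih =>
      simp only [kurodaEight] at ih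
      apply ML.impI
      refine ML.impE ih.wk (ML.impI (ML.impE (ML.allE a ML.ax0) ML.ax1))
  | @exI Γ f a _ ih =>
      simp only [kurodaEight]
      exact ML.impI (ML.impE ih.wk (ML.impI (ML.impE ML.ax1 (ML.exI a ML.ax0))))
  | @exE Γ f C _ _ ih ihs =>
      simp only [kurodaEight] at ih
      simp only [Set.image_insert_eq] at ihs
      apply ML.impI
      refine ML.impE ih.wk (ML.impI (ML.exE ML.ax0 (fun a => ?_)))
      exact ML.impE (ML.impE (ML.impI (ihs a)).wk.wk.wk (ML.dni ML.ax0)) ML.ax2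
  | @dne Γ A _ ih =>
      simp only [Formula.neg, kurodaEight] at ih
      apply ML.impI
      have nbot : ∀ {Δ : Set (Formula α)}, ML Δ (Formula.bot.neg) := ML.impI ML.ax0
      have hX : ML (insert (kurodaEight A).neg ((fun G => (kurodaEight G).neg.neg) '' Γ))
          ((((kurodaEight A).and Formula.bot.neg).neg).and Formula.bot.neg) :=
        ML.andI (ML.impI (ML.impE ML.ax1 (ML.andE1 ML.ax0))) nbot
      exact ML.impE (ih.tne.wk) hX
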